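/- arXiv:2207.00853 — 3 statements merged into one kernel-verified Lean document; each statement's English description precedes it below -/
import Mathlib

section
/- For every real a with 0 ≤ a ≤ 1 and every z ∈ ℝ one has Ψ*(a·z) ≤ a²·Ψ*(z), i.e. e^{az} + e^{−az} − 2 ≤ a²·(e^{z} + e^{−z} − 2). -/
/-!
Since `e^z + e^{-z} - 2 = (e^{z/2} - e^{-z/2})^2 = 4 sinh² (z/2)`, the claim is
`|sinh (a w)| ≤ a |sinh w|`. By oddness it suffices to take `w ≥ 0`, where it holds because
`sinh` is convex on `[0, ∞)` and vanishes at `0`.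
-/

/-- The dual function `Ψ*(z) = e^z + e^{-z} - 2`. -/
noncomputable def PsiStar (z : ℝ) : ℝ := Real.exp z + Real.exp (-z) - 2

open Real Set

theorem ConvexOn.map_smul_le_smul_map {𝕜 E β : Type*} [Ring 𝕜] [PartialOrder 𝕜] [IsOrderedRing 𝕜]
    [AddCommMonoid E] [Module 𝕜 E] [AddCommMonoid β] [PartialOrder β] [Module 𝕜 β]
    {s : Set E} {f : E → β} (hf : ConvexOn 𝕜 s f) (h₀ : (0 : E) ∈ s) (hf₀ : f 0 = 0)
    {x : E} (hx : x ∈ s) {a : 𝕜} (ha₀ : 0 ≤ a) (ha₁ : a ≤ 1) :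
    f (a • x) ≤ a • f x := by
  simpa [hf₀] using hf.2 hx h₀ ha₀ (sub_nonneg.2 ha₁) (add_sub_cancel a 1)

theorem Real.convexOn_sinh_Ici : ConvexOn ℝ (Ici 0) sinh := by
  refine (StrictMonoOn.strictConvexOn_of_deriv (convex_Ici 0) continuous_sinh.continuousOn
    ?_).convexOn
  rw [deriv_sinh, interior_Ici]
  exact cosh_strictMonoOn.mono Ioi_subset_Ici_self

theorem Real.abs_sinh_mul_le {a : ℝ} (ha₀ : 0 ≤ a) (ha₁ : a ≤ 1) (x : ℝ) :
    |sinh (a * x)| ≤ a * |sinh x| := by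
  rw [abs_sinh, abs_sinh, abs_mul, abs_of_nonneg ha₀]
  exact convexOn_sinh_Ici.map_smul_le_smul_map self_mem_Ici sinh_zero (abs_nonneg x) ha₀ ha₁

theorem psiStar_eq_four_mul_sinh_sq (z : ℝ) : PsiStar z = 4 * sinh (z / 2) ^ 2 := by
  have h := cosh_two_mul (z / 2)
  rw [mul_div_cancel₀ z two_ne_zero, cosh_sq] at h
  rw [PsiStar]
  linarith [cosh_eq z]

/-- For every `0 ≤ a ≤ 1` and every `z ∈ ℝ`, `Ψ*(a·z) ≤ a² · Ψ*(z)`. -/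
theorem psiStar_scaling (a z : ℝ) (ha0 : 0 ≤ a) (ha1 : a ≤ 1) :
    PsiStar (a * z) ≤ a ^ 2 * PsiStar z := by
  calc PsiStar (a * z) = 4 * |sinh (a * (z / 2))| ^ 2 := by
        rw [psiStar_eq_four_mul_sinh_sq, sq_abs, mul_div_assoc]
    _ ≤ 4 * (a * |sinh (z / 2)|) ^ 2 := by gcongr; exact abs_sinh_mul_le ha0 ha1 _
    _ = a ^ 2 * PsiStar z := by rw [psiStar_eq_four_mul_sinh_sq, mul_pow, sq_abs]; ring
end

section
/- Let τ > 0, let u₀ ∈ L¹(γ) be nonnegative, and let u : [0,τ] → L¹(γ) be continuous with u(0) = u₀, u(t) ≥ 0 γ-a.e., and u(t) = u₀ + ∫₀ᵗ c_{u(s)}·(1 − u(s)) ds in L¹(γ) for all t ∈ [0,τ]. Then for every t ∈ [0,τ] one has ∫_T u(t) dγ ≤ e^{‖c‖_∞ · γ(T) · t} · ∫_T u₀ dγ. -/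
open MeasureTheory intervalIntegral
open scoped ENNReal Classical

/-- `c_v(x) = ∫ c(x,y) v(y) γ(dy)`. -/
noncomputable def cDens {T : Type*} [MeasurableSpace T] (γ : Measure T) (c : T → T → ℝ)
    (v : T → ℝ) (x : T) : ℝ :=
  ∫ y, c x y * v y ∂γ

/-- The mean-field vector field in density form: `v ↦ c_v·(1 − v)`. -/
noncomputable def mfField {T : Type*} [MeasurableSpace T] (γ : Measure T) (c : T → T → ℝ)
    (v : T → ℝ) : T → ℝ :=
  fun x => cDens γ c v x * (1 - v x)

/-- The mean-field vector field as a (partially defined, defaulting to `0`) map on `L¹(γ)`. -/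
noncomputable def mfFieldLp {T : Type*} [MeasurableSpace T] (γ : Measure T) (c : T → T → ℝ)
    (v : Lp ℝ 1 γ) : Lp ℝ 1 γ :=
  if h : MemLp (mfField γ c v) 1 γ then MemLp.toLp _ h else 0

/-- `u : [0,τ] → L¹(γ)` is a strong solution of the mean-field equation
`∂_t u = c_u·(1 − u)` with initial datum `u₀`: it is continuous on `[0,τ]`,
nonnegative, and satisfies the integral (Bochner) formulation of the equation. -/
def IsMFSolution {T : Type*} [MeasurableSpace T] (γ : Measure T) (c : T → T → ℝ)
    (τ : ℝ) (u₀ : Lp ℝ 1 γ) (u : ℝ → Lp ℝ 1 γ) : Prop :=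
  ContinuousOn u (Set.Icc 0 τ) ∧ u 0 = u₀ ∧
    (∀ t ∈ Set.Icc (0 : ℝ) τ, 0 ≤ᵐ[γ] (u t : T → ℝ)) ∧
    ∀ t ∈ Set.Icc (0 : ℝ) τ,
      IntervalIntegrable (fun s => mfFieldLp γ c (u s)) MeasureTheory.volume 0 t ∧
        u t = u₀ + ∫ s in (0 : ℝ)..t, mfFieldLp γ c (u s)

/-! The mass `m(t) = ∫ u(t) dγ` obeys `m(t) = m(0) + ∫₀ᵗ ∫ c_{u(s)}(1 - u(s)) dγ ds`. For
`u ≥ 0` the inner integrand is at most `c_{u(s)} ≤ ‖c‖_∞ m(s)`, so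
`m(t) ≤ m(0) + ‖c‖_∞ γ(T) ∫₀ᵗ m(s) ds`, and Grönwall's inequality in integral form gives the
exponential bound. -/

open Set Real

theorem le_exp_mul_of_le_add_mul_integral {f : ℝ → ℝ} {a k τ : ℝ} (hk : 0 ≤ k)
    (hf : ContinuousOn f (Icc 0 τ)) (h : ∀ t ∈ Icc 0 τ, f t ≤ a + k * ∫ s in 0..t, f s) :
    ∀ t ∈ Icc 0 τ, f t ≤ exp (k * t) * a := by
  intro t ht
  have hτ : 0 ≤ τ := ht.1.trans ht.2
  -- extend `f` continuously to `ℝ` so that its primitive is differentiable everywhere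
  set g := IccExtend hτ ((Icc 0 τ).domRestrict f)
  have hg : Continuous g :=
    continuous_IccExtend_iff.mpr (continuousOn_iff_continuous_domRestrict.mp hf)
  have hgf : ∀ x ∈ Icc 0 τ, g x = f x := fun x hx => IccExtend_of_mem hτ _ hx
  have hf_le : ∀ x ∈ Icc 0 τ, f x ≤ a + k * ∫ s in 0..x, g s := by
    intro x hx
    rw [integral_congr fun s hs =>
      hgf s (Icc_subset_Icc_right hx.2 (by rwa [uIcc_of_le hx.1] at hs))]
    exact h x hx
  have hN : ∀ x, HasDerivAt (fun x => a + k * ∫ s in 0..x, g s) (k * g x) x := fun x =>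
    ((hg.integral_hasStrictDerivAt 0 x).hasDerivAt.const_mul k).const_add a
  have hN_le := le_gronwallBound_of_liminf_deriv_right_le
    (f := fun x => a + k * ∫ s in 0..x, g s) (f' := fun x => k * g x) (δ := a) (K := k) (ε := 0)
    (fun x _ => (hN x).continuousAt.continuousWithinAt)
    (fun x _ _ hr => (hN x).hasDerivWithinAt.liminf_right_slope_le hr) (by simp)
    (fun x hx => by
      rw [add_zero, hgf x (Ico_subset_Icc_self hx)]
      exact mul_le_mul_of_nonneg_left (hf_le x (Ico_subset_Icc_self hx)) hk) t ht
  rw [gronwallBound_ε0, sub_zero, mul_comm a] at hN_le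
  exact (hf_le t ht).trans hN_le

theorem integral_lp_eq_integralCLM {α : Type*} [MeasurableSpace α] {μ : Measure α}
    (v : Lp ℝ 1 μ) : ∫ x, v x ∂μ = L1.integralCLM v := by
  rw [← L1.integral_eq, L1.integral_eq_integral]

section MeanField

variable {T : Type*} [MeasurableSpace T] {γ : Measure T} {c : T → T → ℝ} {K : ℝ} {v : T → ℝ}

theorem cDens_nonneg (hc : ∀ x y, 0 ≤ c x y) (hv : 0 ≤ᵐ[γ] v) (x : T) : 0 ≤ cDens γ c v x :=
  integral_nonneg_of_ae <| hv.mono fun y hy => mul_nonneg (hc x y) hy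

theorem cDens_le_mul_integral (hc_meas : Measurable fun p : T × T => c p.1 p.2)
    (hc : ∀ x y, 0 ≤ c x y) (hcK : ∀ x y, c x y ≤ K) (hv : Integrable v γ) (hv0 : 0 ≤ᵐ[γ] v)
    (x : T) : cDens γ c v x ≤ K * ∫ y, v y ∂γ := by
  have hcx : AEStronglyMeasurable (c x) γ :=
    (hc_meas.comp measurable_prodMk_left).aestronglyMeasurable
  rw [cDens, ← MeasureTheory.integral_const_mul]
  refine integral_mono_ae (hv.bdd_mul hcx (c := K) (.of_forall fun y => ?_)) (hv.const_mul K)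
    (hv0.mono fun y hy => mul_le_mul_of_nonneg_right (hcK x y) hy)
  rw [Real.norm_eq_abs, abs_of_nonneg (hc x y)]
  exact hcK x y

theorem mfField_le_cDens (hc : ∀ x y, 0 ≤ c x y) (hv : 0 ≤ᵐ[γ] v) :
    mfField γ c v ≤ᵐ[γ] cDens γ c v :=
  hv.mono fun x hx => mul_le_of_le_one_right (cDens_nonneg hc hv x) (sub_le_self _ hx)

theorem integral_mfFieldLp_le [IsFiniteMeasure γ]
    (hc_meas : Measurable fun p : T × T => c p.1 p.2) (hc : ∀ x y, 0 ≤ c x y)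
    (hcK : ∀ x y, c x y ≤ K) (hK : 0 ≤ K) (v : Lp ℝ 1 γ)
    (hv : 0 ≤ᵐ[γ] (v : T → ℝ)) :
    ∫ x, mfFieldLp γ c v x ∂γ ≤ K * γ.real univ * ∫ x, v x ∂γ := by
  unfold mfFieldLp
  split_ifs with h
  · rw [integral_congr_ae h.coeFn_toLp]
    refine (integral_mono_ae (memLp_one_iff_integrable.mp h)
      (integrable_const (K * ∫ x, v x ∂γ)) ?_).trans_eq ?_
    · filter_upwards [mfField_le_cDens hc hv] with x hx
      exact hx.trans (cDens_le_mul_integral hc_meas hc hcK (L1.integrable_coeFn v) hv x)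
    · rw [MeasureTheory.integral_const, smul_eq_mul]
      ring
  · rw [MeasureTheory.integral_congr_ae (Lp.coeFn_zero ℝ 1 γ)]
    simp only [Pi.zero_apply, integral_zero]
    exact mul_nonneg (mul_nonneg hK measureReal_nonneg) (integral_nonneg_of_ae hv)

end MeanField

namespace IsMFSolution

variable {T : Type*} [MeasurableSpace T] {γ : Measure T} {c : T → T → ℝ} {τ t : ℝ}
  {u₀ : Lp ℝ 1 γ} {u : ℝ → Lp ℝ 1 γ}

theorem continuousOn_integral (hu : IsMFSolution γ c τ u₀ u) :
    ContinuousOn (fun t => ∫ x, u t x ∂γ) (Icc 0 τ) := by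
  simp_rw [integral_lp_eq_integralCLM]
  exact L1.integralCLM.continuous.comp_continuousOn hu.1

theorem intervalIntegrable_integral_mfFieldLp (hu : IsMFSolution γ c τ u₀ u)
    (ht : t ∈ Icc 0 τ) :
    IntervalIntegrable (fun s => ∫ x, mfFieldLp γ c (u s) x ∂γ) volume 0 t := by
  obtain ⟨hint, -⟩ := hu.2.2.2 t ht
  simp_rw [integral_lp_eq_integralCLM]
  exact ⟨(L1.integralCLM (E := ℝ) (μ := γ)).integrable_comp hint.1,
    (L1.integralCLM (E := ℝ) (μ := γ)).integrable_comp hint.2⟩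

theorem integral_eq (hu : IsMFSolution γ c τ u₀ u) (ht : t ∈ Icc 0 τ) :
    ∫ x, u t x ∂γ = ∫ x, u₀ x ∂γ + ∫ s in 0..t, ∫ x, mfFieldLp γ c (u s) x ∂γ := by
  obtain ⟨hint, heq⟩ := hu.2.2.2 t ht
  simp_rw [integral_lp_eq_integralCLM]
  rw [heq, map_add, L1.integralCLM.intervalIntegral_comp_comm hint]

theorem integral_le_add_mul_integral [IsFiniteMeasure γ] {K : ℝ} (hu : IsMFSolution γ c τ u₀ u)
    (hc_meas : Measurable fun p : T × T => c p.1 p.2) (hc : ∀ x y, 0 ≤ c x y)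
    (hcK : ∀ x y, c x y ≤ K) (hK : 0 ≤ K) (ht : t ∈ Icc 0 τ) :
    ∫ x, u t x ∂γ ≤ ∫ x, u₀ x ∂γ + K * γ.real univ * ∫ s in 0..t, ∫ x, u s x ∂γ := by
  have hmass_int : IntervalIntegrable (fun s => ∫ x, u s x ∂γ) volume 0 t :=
    (hu.continuousOn_integral.mono (Icc_subset_Icc_right ht.2)).intervalIntegrable_of_Icc ht.1
  rw [hu.integral_eq ht, ← intervalIntegral.integral_const_mul]
  gcongr
  exact integral_mono_on ht.1 (hu.intervalIntegrable_integral_mfFieldLp ht)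
    (hmass_int.const_mul _) fun s hs =>
      integral_mfFieldLp_le hc_meas hc hcK hK (u s) (hu.2.2.1 s ⟨hs.1, hs.2.trans ht.2⟩)

end IsMFSolution

theorem mf_mass_growth_general {T : Type*}
    [MeasurableSpace T]
    (γ : Measure T) [IsFiniteMeasure γ]
    (c : T → T → ℝ) (hc_meas : Measurable fun p : T × T => c p.1 p.2)
    (hc_nonneg : ∀ x y, 0 ≤ c x y)
    (hc_bdd : BddAbove (Set.range fun p : T × T => c p.1 p.2))
    (τ : ℝ)
    (u₀ : Lp ℝ 1 γ)
    (u : ℝ → Lp ℝ 1 γ) (hu : IsMFSolution γ c τ u₀ u) :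
    ∀ t ∈ Set.Icc (0 : ℝ) τ,
      ∫ x, u t x ∂γ ≤
        Real.exp ((⨆ p : T × T, c p.1 p.2) * (γ Set.univ).toReal * t) * ∫ x, u₀ x ∂γ := by
  have hcK : ∀ x y, c x y ≤ ⨆ p : T × T, c p.1 p.2 := fun x y => le_ciSup hc_bdd (x, y)
  have hK : 0 ≤ ⨆ p : T × T, c p.1 p.2 := Real.iSup_nonneg fun p => hc_nonneg p.1 p.2
  exact le_exp_mul_of_le_add_mul_integral (mul_nonneg hK measureReal_nonneg)
    hu.continuousOn_integral fun t ht =>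
      hu.integral_le_add_mul_integral hc_meas hc_nonneg hcK hK ht

/-- Exponential mass growth along mean-field solutions:
`∫ u(t) dγ ≤ e^{‖c‖_∞·γ(T)·t} · ∫ u₀ dγ` for `t ∈ [0,τ]`. -/
theorem mf_mass_growth {T : Type*} [TopologicalSpace T] [CompactSpace T] [PolishSpace T]
    [MeasurableSpace T] [BorelSpace T]
    (γ : Measure T) [IsFiniteMeasure γ]
    (c : T → T → ℝ) (hc_meas : Measurable fun p : T × T => c p.1 p.2)
    (hc_nonneg : ∀ x y, 0 ≤ c x y)
    (hc_bdd : BddAbove (Set.range fun p : T × T => c p.1 p.2))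
    (hc_diag : ∀ x, c x x = 0)
    (τ : ℝ) (hτ : 0 < τ)
    (u₀ : Lp ℝ 1 γ) (hu₀ : 0 ≤ᵐ[γ] (u₀ : T → ℝ))
    (u : ℝ → Lp ℝ 1 γ) (hu : IsMFSolution γ c τ u₀ u) :
    ∀ t ∈ Set.Icc (0 : ℝ) τ,
      ∫ x, u t x ∂γ ≤
        Real.exp ((⨆ p : T × T, c p.1 p.2) * (γ Set.univ).toReal * t) * ∫ x, u₀ x ∂γ :=
  mf_mass_growth_general γ c hc_meas hc_nonneg hc_bdd τ u₀ u hu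
end

section
/- For every n > 0 and every bounded measurable function ω : (Measure T) × T → [0,∞), the following two series of nonnegative terms are finite and equal: Σ_{N=1}^∞ (n^N/N!) ∫_{T^N} ( ∫_T ω(L_N(𝐱), z) · (Σ_{j=1}^N c(z, x_j)) γ(dz) ) γ^{⊗N}(d𝐱) = Σ_{N=1}^∞ (n^N/N!) ∫_{T^N} ( (1/n) · Σ_{i=1}^N Σ_{j=1}^N ω( (1/n)·Σ_{k≠i} δ_{x_k}, x_i ) · c(x_i, x_j) ) γ^{⊗N}(d𝐱). -/
/-!
For `m + 1` particles, the removal term of particle `i` is exactly the rate of inserting a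
particle at `x i` into the configuration of the other `m` particles, because the diagonal term
`c (x i) (x i)` vanishes. Splitting off the `i`-th coordinate of `γ^{⊗(m+1)}` (and Tonelli)
turns each of the `m + 1` removal terms into the `m`-particle insertion integral, so the
`(m+1)`-particle removal term is `(m + 1) / n` times the `m`-particle insertion term. Since
`n^(m+1) / (m+1)! · (m + 1) / n = n^m / m!`, the removal series is the insertion series shifted
by one, and its one-particle term is zero. Finiteness: the insertion integrand is at most
`B · m · C`, so the series is dominated by an exponential series.
-/

open MeasureTheory
open scoped ENNReal Classical

/-- The rescaled empirical measure `L_N(𝐱) = (1/n)·Σ_{k} δ_{x_k}`. -/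
noncomputable def empMeas {T : Type*} [MeasurableSpace T] (n : ℝ) {m : ℕ} (x : Fin m → T) :
    Measure T :=
  ENNReal.ofReal (1 / n) • ∑ k : Fin m, Measure.dirac (x k)

/-- The rescaled empirical measure with the `i`-th particle removed:
`(1/n)·Σ_{k ≠ i} δ_{x_k}`. -/
noncomputable def empMeasErase {T : Type*} [MeasurableSpace T] (n : ℝ) {m : ℕ} (x : Fin m → T)
    (i : Fin m) : Measure T :=
  ENNReal.ofReal (1 / n) • ∑ k ∈ Finset.univ.erase i, Measure.dirac (x k)

open Finset

lemma Fin.sum_univ_erase_eq_sum_succAbove {M : Type*} [AddCommMonoid M] {m : ℕ}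
    (i : Fin (m + 1)) (f : Fin (m + 1) → M) :
    ∑ k ∈ univ.erase i, f k = ∑ j, f (i.succAbove j) := by
  rw [← compl_singleton, ← Fin.image_succAbove_univ,
    sum_image fun _ _ _ _ h => Fin.succAbove_right_injective h]

lemma lintegral_pi_comp_piFinSuccAbove {T : Type*} [MeasurableSpace T] (γ : Measure T)
    [SigmaFinite γ] {m : ℕ} {f : T → (Fin m → T) → ℝ≥0∞}
    (hf : Measurable fun p : T × (Fin m → T) => f p.1 p.2) (i : Fin (m + 1)) :
    ∫⁻ x, f (x i) (fun j => x (i.succAbove j)) ∂Measure.pi (fun _ => γ) =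
      ∫⁻ y, ∫⁻ z, f z y ∂γ ∂Measure.pi (fun _ => γ) :=
  ((measurePreserving_piFinSuccAbove (fun _ => γ) i).lintegral_comp_emb
    (MeasurableEquiv.measurableEmbedding _) (Function.uncurry f)).trans
    (lintegral_prod_symm' _ hf)

lemma lintegral_pi_lintegral_le {T : Type*} [MeasurableSpace T] (γ : Measure T) [SigmaFinite γ]
    {m : ℕ} {F : (Fin m → T) → T → ℝ≥0∞} {M : ℝ≥0∞} (hF : ∀ x z, F x z ≤ M) :
    ∫⁻ x, ∫⁻ z, F x z ∂γ ∂Measure.pi (fun _ => γ) ≤ M * γ Set.univ ^ (m + 1) :=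
  calc ∫⁻ x, ∫⁻ z, F x z ∂γ ∂Measure.pi (fun _ => γ)
      ≤ ∫⁻ _ : Fin m → T, ∫⁻ _, M ∂γ ∂Measure.pi (fun _ => γ) :=
        lintegral_mono fun x => lintegral_mono fun z => hF x z
    _ = M * γ Set.univ ^ (m + 1) := by
      simp [Measure.pi_univ, pow_succ, mul_assoc, mul_comm]

lemma ENNReal.tsum_ne_top_of_le_ofReal {f : ℕ → ℝ≥0∞} {u : ℕ → ℝ} (hu : Summable u)
    (hf : ∀ N, f N ≤ ENNReal.ofReal (u N)) : ∑' N, f N ≠ ⊤ :=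
  ne_top_of_le_ne_top (ENNReal.tsum_coe_ne_top_iff_summable.2 hu.toNNReal)
    (ENNReal.tsum_le_tsum hf)

lemma ENNReal.ofReal_pow_succ_div_factorial_mul {n : ℝ} (hn : 0 < n) (m : ℕ) :
    ENNReal.ofReal (n ^ (m + 1) / (m + 1).factorial) * (ENNReal.ofReal (1 / n) * (m + 1)) =
      ENNReal.ofReal (n ^ m / m.factorial) := by
  rw [← ENNReal.ofReal_natCast, ← ENNReal.ofReal_one,
    ← ENNReal.ofReal_add (by positivity) zero_le_one, ← ENNReal.ofReal_mul (by positivity),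
    ← ENNReal.ofReal_mul (by positivity)]
  congr 1
  rw [Nat.factorial_succ]
  push_cast
  field_simp
  ring

section EmpiricalMeasure

variable {T : Type*} [MeasurableSpace T]

lemma empMeasErase_eq_empMeas_succAbove (n : ℝ) {m : ℕ} (x : Fin (m + 1) → T)
    (i : Fin (m + 1)) : empMeasErase n x i = empMeas n (fun j => x (i.succAbove j)) := by
  rw [empMeasErase, empMeas, Fin.sum_univ_erase_eq_sum_succAbove]

lemma measurable_empMeas (n : ℝ) (m : ℕ) : Measurable fun x : Fin m → T => empMeas n x := by
  refine Measure.measurable_of_measurable_coe _ fun s hs => ?_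
  simp only [empMeas, Measure.smul_apply, Measure.coe_finsetSum, Finset.sum_apply, smul_eq_mul]
  exact (Finset.measurable_sum _ fun k _ => (Measure.measurable_coe hs).comp
    (Measure.measurable_dirac.comp (measurable_pi_apply k))).const_mul _

end EmpiricalMeasure

section DetailedBalance

variable {T : Type*} [MeasurableSpace T] (γ : Measure T) (c : T → T → ℝ) (n : ℝ)
  (ω : Measure T → T → ℝ)

noncomputable def insertionDensity {m : ℕ} (x : Fin m → T) (z : T) : ℝ :=
  ω (empMeas n x) z * ∑ j, c z (x j)

variable {c ω}

lemma measurable_insertionDensity (hc_meas : Measurable fun p : T × T => c p.1 p.2)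
    (hω_meas : Measurable fun p : Measure T × T => ω p.1 p.2) (m : ℕ) :
    Measurable fun p : (Fin m → T) × T => insertionDensity c n ω p.1 p.2 :=
  (hω_meas.comp ((measurable_empMeas n m).comp measurable_fst |>.prodMk measurable_snd)).mul
    (Finset.measurable_sum _ fun j _ =>
      hc_meas.comp (measurable_snd.prodMk ((measurable_pi_apply j).comp measurable_fst)))

lemma insertionDensity_nonneg (hc_nonneg : ∀ x y, 0 ≤ c x y) (hω_nonneg : ∀ μ x, 0 ≤ ω μ x)
    {m : ℕ} (x : Fin m → T) (z : T) : 0 ≤ insertionDensity c n ω x z :=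
  mul_nonneg (hω_nonneg _ _) (sum_nonneg fun _ _ => hc_nonneg _ _)

lemma insertionDensity_le {B C : ℝ} (hc_nonneg : ∀ x y, 0 ≤ c x y) (hC : ∀ x y, c x y ≤ C)
    (hω_nonneg : ∀ μ x, 0 ≤ ω μ x) (hB : ∀ μ x, ω μ x ≤ B) {m : ℕ} (x : Fin m → T) (z : T) :
    insertionDensity c n ω x z ≤ B * (m * C) := by
  refine mul_le_mul (hB _ _) ?_ (sum_nonneg fun _ _ => hc_nonneg _ _)
    ((hω_nonneg (empMeas n x) z).trans (hB _ _))
  simpa using sum_le_sum fun j (_ : j ∈ univ) => hC z (x j)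

lemma sum_removal_eq_insertionDensity (hc_diag : ∀ x, c x x = 0) {m : ℕ} (x : Fin (m + 1) → T)
    (i : Fin (m + 1)) :
    ∑ j, ω (empMeasErase n x i) (x i) * c (x i) (x j) =
      insertionDensity c n ω (fun j => x (i.succAbove j)) (x i) := by
  rw [insertionDensity, ← mul_sum, Fin.sum_univ_succAbove _ i, hc_diag, zero_add,
    empMeasErase_eq_empMeas_succAbove]

lemma lintegral_removal_eq_mul_lintegral_insertion [SigmaFinite γ] (hn : 0 < n)
    (hc_meas : Measurable fun p : T × T => c p.1 p.2) (hc_nonneg : ∀ x y, 0 ≤ c x y)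
    (hc_diag : ∀ x, c x x = 0) (hω_meas : Measurable fun p : Measure T × T => ω p.1 p.2)
    (hω_nonneg : ∀ μ x, 0 ≤ ω μ x) (m : ℕ) :
    ∫⁻ x : Fin (m + 1) → T,
        ENNReal.ofReal ((1 / n) * ∑ i, ∑ j, ω (empMeasErase n x i) (x i) * c (x i) (x j))
        ∂Measure.pi (fun _ => γ) =
      ENNReal.ofReal (1 / n) * (m + 1) *
        ∫⁻ x : Fin m → T, ∫⁻ z, ENNReal.ofReal (insertionDensity c n ω x z) ∂γ
          ∂Measure.pi (fun _ => γ) := by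
  have hf :
      Measurable fun p : T × (Fin m → T) => ENNReal.ofReal (insertionDensity c n ω p.2 p.1) :=
    ((measurable_insertionDensity n hc_meas hω_meas m).comp measurable_swap).ennreal_ofReal
  calc ∫⁻ x : Fin (m + 1) → T,
        ENNReal.ofReal ((1 / n) * ∑ i, ∑ j, ω (empMeasErase n x i) (x i) * c (x i) (x j))
        ∂Measure.pi (fun _ => γ)
      = ∫⁻ x : Fin (m + 1) → T, ENNReal.ofReal (1 / n) *
          ∑ i, ENNReal.ofReal (insertionDensity c n ω (fun j => x (i.succAbove j)) (x i))
          ∂Measure.pi (fun _ => γ) := by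
        refine lintegral_congr fun x => ?_
        simp_rw [sum_removal_eq_insertionDensity n hc_diag]
        rw [ENNReal.ofReal_mul (by positivity), ENNReal.ofReal_sum_of_nonneg fun i _ =>
          insertionDensity_nonneg n hc_nonneg hω_nonneg _ _]
    _ = ENNReal.ofReal (1 / n) * ∑ _i : Fin (m + 1),
          ∫⁻ x : Fin m → T, ∫⁻ z, ENNReal.ofReal (insertionDensity c n ω x z) ∂γ
            ∂Measure.pi (fun _ => γ) := by
        have hsummand : ∀ i : Fin (m + 1), Measurable fun x : Fin (m + 1) → T =>
            ENNReal.ofReal (insertionDensity c n ω (fun j => x (i.succAbove j)) (x i)) :=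
          fun i => by
            have hsplit : Measurable fun x : Fin (m + 1) → T => (fun j => x (i.succAbove j), x i) :=
              (measurable_pi_lambda _ fun _ => measurable_pi_apply _).prodMk
                (measurable_pi_apply i)
            exact ((measurable_insertionDensity n hc_meas hω_meas m).comp hsplit).ennreal_ofReal
        rw [lintegral_const_mul _ (Finset.measurable_sum _ fun i _ => hsummand i),
          lintegral_finsetSum _ fun i _ => hsummand i]
        simp_rw [lintegral_pi_comp_piFinSuccAbove γ
          (f := fun z y => ENNReal.ofReal (insertionDensity c n ω y z)) hf]
    _ = _ := by simp [mul_assoc]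

lemma tsum_insertion_ne_top [IsFiniteMeasure γ] (hn : 0 < n) {B C : ℝ}
    (hc_nonneg : ∀ x y, 0 ≤ c x y) (hC : ∀ x y, c x y ≤ C)
    (hω_nonneg : ∀ μ x, 0 ≤ ω μ x) (hB : ∀ μ x, ω μ x ≤ B) :
    ∑' N : ℕ, ENNReal.ofReal (n ^ (N + 1) / (N + 1).factorial) *
      ∫⁻ x : Fin (N + 1) → T, ∫⁻ z, ENNReal.ofReal (insertionDensity c n ω x z) ∂γ
        ∂Measure.pi (fun _ => γ) ≠ ⊤ := by
  set G := γ.real Set.univ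
  refine ENNReal.tsum_ne_top_of_le_ofReal
    ((Real.summable_pow_div_factorial (n * G)).mul_left (B * C * G ^ 2 * n)) fun N => ?_
  calc ENNReal.ofReal (n ^ (N + 1) / (N + 1).factorial) *
        ∫⁻ x : Fin (N + 1) → T, ∫⁻ z, ENNReal.ofReal (insertionDensity c n ω x z) ∂γ
          ∂Measure.pi (fun _ => γ)
      ≤ ENNReal.ofReal (n ^ (N + 1) / (N + 1).factorial) *
          (ENNReal.ofReal (B * ((N + 1 : ℕ) * C)) * γ Set.univ ^ (N + 2)) := by
        gcongr
        exact lintegral_pi_lintegral_le γ fun x z => ENNReal.ofReal_le_ofReal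
          (insertionDensity_le n hc_nonneg hC hω_nonneg hB x z)
    _ = ENNReal.ofReal (B * C * G ^ 2 * n * ((n * G) ^ N / N.factorial)) := by
        rw [← ofReal_measureReal, ← ENNReal.ofReal_pow measureReal_nonneg,
          ← ENNReal.ofReal_mul' (by positivity), ← ENNReal.ofReal_mul (by positivity)]
        congr 1
        rw [Nat.factorial_succ]
        push_cast
        field_simp
        ring

end DetailedBalance

theorem detailed_balance_series_general {T : Type*} [MeasurableSpace T]
    (γ : Measure T) [IsFiniteMeasure γ]
    (c : T → T → ℝ) (hc_meas : Measurable fun p : T × T => c p.1 p.2)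
    (hc_nonneg : ∀ x y, 0 ≤ c x y)
    (hc_bdd : BddAbove (Set.range fun p : T × T => c p.1 p.2))
    (hc_diag : ∀ x, c x x = 0)
    (n : ℝ) (hn : 0 < n)
    (ω : Measure T → T → ℝ)
    (hω_meas : Measurable fun p : Measure T × T => ω p.1 p.2)
    (hω_nonneg : ∀ μ x, 0 ≤ ω μ x)
    (hω_bdd : ∃ B : ℝ, ∀ μ x, ω μ x ≤ B) :
    (∑' N : ℕ, ENNReal.ofReal (n ^ (N + 1) / (Nat.factorial (N + 1) : ℝ)) *
        ∫⁻ x : Fin (N + 1) → T,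
          ∫⁻ z, ENNReal.ofReal (ω (empMeas n x) z * ∑ j : Fin (N + 1), c z (x j)) ∂γ
          ∂(Measure.pi fun _ : Fin (N + 1) => γ)) ≠ ⊤ ∧
    (∑' N : ℕ, ENNReal.ofReal (n ^ (N + 1) / (Nat.factorial (N + 1) : ℝ)) *
        ∫⁻ x : Fin (N + 1) → T,
          ∫⁻ z, ENNReal.ofReal (ω (empMeas n x) z * ∑ j : Fin (N + 1), c z (x j)) ∂γ
          ∂(Measure.pi fun _ : Fin (N + 1) => γ)) =
      ∑' N : ℕ, ENNReal.ofReal (n ^ (N + 1) / (Nat.factorial (N + 1) : ℝ)) *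
        ∫⁻ x : Fin (N + 1) → T,
          ENNReal.ofReal ((1 / n) * ∑ i : Fin (N + 1), ∑ j : Fin (N + 1),
            ω (empMeasErase n x i) (x i) * c (x i) (x j))
          ∂(Measure.pi fun _ : Fin (N + 1) => γ) := by
  obtain ⟨B, hB⟩ := hω_bdd
  obtain ⟨C, hC⟩ := hc_bdd
  refine ⟨tsum_insertion_ne_top γ n hn hc_nonneg (fun x y => hC ⟨(x, y), rfl⟩) hω_nonneg hB, ?_⟩
  simp_rw [lintegral_removal_eq_mul_lintegral_insertion γ n hn hc_meas hc_nonneg hc_diag hω_meas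
    hω_nonneg]
  rw [eq_comm, tsum_eq_zero_add' ENNReal.summable]
  have h_no_particles : ∫⁻ x : Fin 0 → T, ∫⁻ z, ENNReal.ofReal (insertionDensity c n ω x z) ∂γ
      ∂Measure.pi (fun _ => γ) = 0 := by
    simp [insertionDensity]
  rw [h_no_particles, mul_zero, mul_zero, zero_add]
  refine tsum_congr fun N => ?_
  rw [← mul_assoc, ENNReal.ofReal_pow_succ_div_factorial_mul hn]
  rfl

/-- Lemma 3.2 (detailed balance, Poissonized form): the two series of nonnegative terms
indexed by the number of particles `N ≥ 1` are finite and equal. -/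
theorem detailed_balance_series {T : Type*} [TopologicalSpace T] [CompactSpace T] [PolishSpace T]
    [MeasurableSpace T] [BorelSpace T]
    (γ : Measure T) [IsFiniteMeasure γ]
    (c : T → T → ℝ) (hc_meas : Measurable fun p : T × T => c p.1 p.2)
    (hc_nonneg : ∀ x y, 0 ≤ c x y)
    (hc_bdd : BddAbove (Set.range fun p : T × T => c p.1 p.2))
    (hc_diag : ∀ x, c x x = 0)
    (n : ℝ) (hn : 0 < n)
    (ω : Measure T → T → ℝ)
    (hω_meas : Measurable fun p : Measure T × T => ω p.1 p.2)
    (hω_nonneg : ∀ μ x, 0 ≤ ω μ x)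
    (hω_bdd : ∃ B : ℝ, ∀ μ x, ω μ x ≤ B) :
    (∑' N : ℕ, ENNReal.ofReal (n ^ (N + 1) / (Nat.factorial (N + 1) : ℝ)) *
        ∫⁻ x : Fin (N + 1) → T,
          ∫⁻ z, ENNReal.ofReal (ω (empMeas n x) z * ∑ j : Fin (N + 1), c z (x j)) ∂γ
          ∂(Measure.pi fun _ : Fin (N + 1) => γ)) ≠ ⊤ ∧
    (∑' N : ℕ, ENNReal.ofReal (n ^ (N + 1) / (Nat.factorial (N + 1) : ℝ)) *
        ∫⁻ x : Fin (N + 1) → T,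
          ∫⁻ z, ENNReal.ofReal (ω (empMeas n x) z * ∑ j : Fin (N + 1), c z (x j)) ∂γ
          ∂(Measure.pi fun _ : Fin (N + 1) => γ)) =
      ∑' N : ℕ, ENNReal.ofReal (n ^ (N + 1) / (Nat.factorial (N + 1) : ℝ)) *
        ∫⁻ x : Fin (N + 1) → T,
          ENNReal.ofReal ((1 / n) * ∑ i : Fin (N + 1), ∑ j : Fin (N + 1),
            ω (empMeasErase n x i) (x i) * c (x i) (x j))
          ∂(Measure.pi fun _ : Fin (N + 1) => γ) :=
  detailed_balance_series_general γ c hc_meas hc_nonneg hc_bdd hc_diag n hn ω hω_meas hω_nonneg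
    hω_bdd
end
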